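/- Let μ be a symmetric probability measure on ℝ, not a Dirac mass, let h(s) = ∫ s/(s²+u²) dμ(u), and fix r > 0 and t > 0. Then s ∈ (t,∞) satisfies (s−t)² − (s−t)/h(s) + r² = 0 if and only if k(s,t) = r², where k(s,t) = (s−t)(1/h(s) − s + t); consequently this equation has a unique solution s(r,t) ∈ (t,∞). -/

import Mathlib

/-!
Write `k(s,t) = (s−t)/h(s) − (s−t)²`. Since `h(s) ≤ 1/s`, `k(s,t) ≥ t(s−t)`, so `k(·,t)` is
continuous and positive on `(t,∞)`, tends to `0` at `t` and is unbounded: it is onto `(0,∞)`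
by the intermediate value theorem.

For strict monotonicity, with `hᵢ = h(sᵢ)` and `c = (s₂−s₁)(s₁+s₂−2t) ≥ 0`,
`h₁h₂ (k(s₂,t) − k(s₁,t)) = (s₂−t)h₁ − (s₁−t)h₂ − c h₁h₂`.
Both kernels `u ↦ sᵢ/(sᵢ²+u²)` decrease in `|u|`, so Chebyshev's integral inequality gives
`h₁h₂ ≤ ∫ (s₁/(s₁²+u²)) (s₂/(s₂²+u²)) dμ`. Hence the right-hand side is at least the
`μ`-average of the same expression for the point masses `δᵤ`, which is
`(s₂−s₁) t (s₁s₂+u²) / ((s₁²+u²)(s₂²+u²)) > 0`.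
-/

open MeasureTheory Set

/-- `h μ s = ∫ s/(s² + u²) dμ(u)`. -/
noncomputable def hfun (μ : MeasureTheory.Measure ℝ) (s : ℝ) : ℝ :=
  ∫ u, s / (s ^ 2 + u ^ 2) ∂μ

/-- `k(s,t) = (s−t)(1/h(s) − s + t)`. -/
noncomputable def kfun (μ : MeasureTheory.Measure ℝ) (s t : ℝ) : ℝ :=
  (s - t) * (1 / hfun μ s - s + t)

theorem Monovary.integral_mul_integral_le_integral_mul {α : Type*} [MeasurableSpace α]
    {μ : Measure α} [IsProbabilityMeasure μ] {f g : α → ℝ} (hfg : Monovary f g)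
    (hf : Integrable f μ) (hg : Integrable g μ) (hfg_int : Integrable (fun x => f x * g x) μ) :
    (∫ x, f x ∂μ) * (∫ x, g x ∂μ) ≤ ∫ x, f x * g x ∂μ := by
  have hfg₂ : Integrable (fun p : α × α => f p.2 * g p.2 + f p.1 * g p.1) (μ.prod μ) :=
    (hfg_int.comp_snd μ).add (hfg_int.comp_fst μ)
  have hfg₁ : Integrable (fun p : α × α => f p.1 * g p.2 + g p.1 * f p.2) (μ.prod μ) :=
    (hf.mul_prod hg).add (hg.mul_prod hf)
  have hdouble : ∫ p : α × α, (f p.2 - f p.1) * (g p.2 - g p.1) ∂μ.prod μ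
      = 2 * ((∫ x, f x * g x ∂μ) - (∫ x, f x ∂μ) * (∫ x, g x ∂μ)) := by
    have hexpand : (fun p : α × α => (f p.2 - f p.1) * (g p.2 - g p.1)) = fun p =>
        f p.2 * g p.2 + f p.1 * g p.1 - (f p.1 * g p.2 + g p.1 * f p.2) := by
      funext p; ring
    rw [hexpand, integral_sub hfg₂ hfg₁, integral_add (hfg_int.comp_snd μ) (hfg_int.comp_fst μ),
      integral_add (hf.mul_prod hg) (hg.mul_prod hf),
      integral_fun_snd (fun x => f x * g x), integral_fun_fst (fun x => f x * g x),
      integral_prod_mul f g, integral_prod_mul g f]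
    simp only [probReal_univ, one_smul]
    ring
  have hnonneg : 0 ≤ ∫ p : α × α, (f p.2 - f p.1) * (g p.2 - g p.1) ∂μ.prod μ :=
    integral_nonneg fun p => hfg.sub_mul_sub_nonneg p.1 p.2
  linarith

theorem integral_pos_of_forall_pos {α : Type*} [MeasurableSpace α] {μ : Measure α} [NeZero μ]
    {f : α → ℝ} (hf : Integrable f μ) (hpos : ∀ x, 0 < f x) : 0 < ∫ x, f x ∂μ := by
  have hsupp : Function.support f = univ := eq_univ_of_forall fun x => (hpos x).ne'
  rw [integral_pos_iff_support_of_nonneg (fun x => (hpos x).le) hf, hsupp]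
  exact Measure.measure_univ_pos.mpr (NeZero.ne μ)

/-- `π⁻¹ cauchyKernel s` is the density of the Cauchy distribution of scale `s`. -/
noncomputable def cauchyKernel (s u : ℝ) : ℝ := s / (s ^ 2 + u ^ 2)

section CauchyKernel

variable {s : ℝ}

theorem cauchyKernel_pos (hs : 0 < s) (u : ℝ) : 0 < cauchyKernel s u := by
  unfold cauchyKernel; positivity

theorem cauchyKernel_le_inv (hs : 0 < s) (u : ℝ) : cauchyKernel s u ≤ s⁻¹ := by
  rw [cauchyKernel, div_le_iff₀ (by positivity), inv_mul_eq_div, le_div_iff₀ hs]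
  nlinarith [sq_nonneg u]

theorem norm_cauchyKernel_le_inv (hs : 0 < s) (u : ℝ) : ‖cauchyKernel s u‖ ≤ s⁻¹ := by
  rw [Real.norm_of_nonneg (cauchyKernel_pos hs u).le]
  exact cauchyKernel_le_inv hs u

theorem measurable_cauchyKernel (s : ℝ) : Measurable (cauchyKernel s) :=
  measurable_const.div (by fun_prop)

theorem integrable_cauchyKernel {μ : Measure ℝ} [IsFiniteMeasure μ] (hs : 0 < s) :
    Integrable (cauchyKernel s) μ :=
  .of_bound (measurable_cauchyKernel s).aestronglyMeasurable s⁻¹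
    (ae_of_all _ (norm_cauchyKernel_le_inv hs))

theorem monovary_cauchyKernel {s₁ s₂ : ℝ} (hs₁ : 0 < s₁) (hs₂ : 0 < s₂) :
    Monovary (cauchyKernel s₁) (cauchyKernel s₂) := by
  intro u v huv
  unfold cauchyKernel at *
  have hvu : v ^ 2 ≤ u ^ 2 := by
    by_contra! h
    exact huv.not_ge (div_le_div_of_nonneg_left hs₂.le (by positivity) (by linarith))
  exact div_le_div_of_nonneg_left hs₁.le (by positivity) (by linarith)

/-- The numerator of `k(s₂,t) − k(s₁,t)` for the point mass `δᵤ`. -/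
theorem cauchyKernel_gap_pos {s₁ s₂ t : ℝ} (ht : 0 < t) (hs₁ : 0 < s₁) (h12 : s₁ < s₂) (u : ℝ) :
    0 < (s₂ - t) * cauchyKernel s₁ u - (s₁ - t) * cauchyKernel s₂ u
      - (s₂ - s₁) * (s₁ + s₂ - 2 * t) * (cauchyKernel s₁ u * cauchyKernel s₂ u) := by
  have hs₂ : 0 < s₂ := hs₁.trans h12
  have hD₁ : 0 < s₁ ^ 2 + u ^ 2 := by positivity
  have hD₂ : 0 < s₂ ^ 2 + u ^ 2 := by positivity
  have hgap : (s₂ - t) * cauchyKernel s₁ u - (s₁ - t) * cauchyKernel s₂ u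
      - (s₂ - s₁) * (s₁ + s₂ - 2 * t) * (cauchyKernel s₁ u * cauchyKernel s₂ u)
      = (s₂ - s₁) * t * (s₁ * s₂ + u ^ 2) / ((s₁ ^ 2 + u ^ 2) * (s₂ ^ 2 + u ^ 2)) := by
    unfold cauchyKernel
    field_simp
    ring
  rw [hgap]
  have : 0 < s₂ - s₁ := sub_pos.mpr h12
  positivity

end CauchyKernel

section KFun

variable {μ : Measure ℝ} {s t : ℝ}

theorem hfun_eq_integral_cauchyKernel (μ : Measure ℝ) (s : ℝ) :
    hfun μ s = ∫ u, cauchyKernel s u ∂μ := rfl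

theorem hfun_pos [IsFiniteMeasure μ] [NeZero μ] (hs : 0 < s) : 0 < hfun μ s :=
  integral_pos_of_forall_pos (integrable_cauchyKernel hs) (cauchyKernel_pos hs)

theorem hfun_le_inv [IsProbabilityMeasure μ] (hs : 0 < s) : hfun μ s ≤ s⁻¹ := by
  have := integral_mono (integrable_cauchyKernel (μ := μ) hs) (integrable_const s⁻¹)
    (cauchyKernel_le_inv hs)
  simpa [hfun_eq_integral_cauchyKernel] using this

theorem continuousOn_hfun [IsFiniteMeasure μ] (ht : 0 < t) : ContinuousOn (hfun μ) (Ici t) := by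
  refine continuousOn_of_dominated (bound := fun _ => t⁻¹)
    (fun s _ => (measurable_cauchyKernel s).aestronglyMeasurable) (fun s (hs : t ≤ s) => ?_)
    (integrable_const _) (ae_of_all _ fun u => ?_)
  · exact ae_of_all _ fun u =>
      (norm_cauchyKernel_le_inv (ht.trans_le hs) u).trans (inv_anti₀ ht hs)
  · refine continuousOn_id.div (by fun_prop) fun s hs => ?_
    have : 0 < s := ht.trans_le hs
    positivity

theorem kfun_eq_div_sub_sq (μ : Measure ℝ) (s t : ℝ) :
    kfun μ s t = (s - t) / hfun μ s - (s - t) ^ 2 := by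
  rw [kfun]; ring

theorem kfun_self (μ : Measure ℝ) (t : ℝ) : kfun μ t t = 0 := by
  simp [kfun]

theorem mul_le_kfun [IsProbabilityMeasure μ] (ht : 0 < t) (hts : t ≤ s) :
    (s - t) * t ≤ kfun μ s t := by
  have hs : 0 < s := ht.trans_le hts
  have h_le : s ≤ 1 / hfun μ s := by
    rw [le_one_div hs (hfun_pos hs)]
    exact (hfun_le_inv hs).trans_eq (one_div s).symm
  rw [kfun]
  exact mul_le_mul_of_nonneg_left (by linarith) (sub_nonneg.mpr hts)

theorem continuousOn_kfun [IsFiniteMeasure μ] [NeZero μ] (ht : 0 < t) :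
    ContinuousOn (fun s => kfun μ s t) (Ici t) := by
  have hne : ∀ s ∈ Ici t, hfun μ s ≠ 0 := fun s hs => (hfun_pos (ht.trans_le hs)).ne'
  unfold kfun
  exact (continuousOn_id.sub continuousOn_const).mul
    (((continuousOn_const.div (continuousOn_hfun ht) hne).sub continuousOn_id).add
      continuousOn_const)

theorem kfun_sub_kfun {s₁ s₂ : ℝ} (h₁ : hfun μ s₁ ≠ 0) (h₂ : hfun μ s₂ ≠ 0) :
    kfun μ s₂ t - kfun μ s₁ t
      = ((s₂ - t) * hfun μ s₁ - (s₁ - t) * hfun μ s₂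
          - (s₂ - s₁) * (s₁ + s₂ - 2 * t) * (hfun μ s₁ * hfun μ s₂))
        / (hfun μ s₁ * hfun μ s₂) := by
  rw [kfun_eq_div_sub_sq, kfun_eq_div_sub_sq]
  field_simp
  ring

theorem strictMonoOn_kfun [IsProbabilityMeasure μ] (ht : 0 < t) :
    StrictMonoOn (fun s => kfun μ s t) (Ioi t) := by
  intro s₁ (hts₁ : t < s₁) s₂ (hts₂ : t < s₂) h12
  have hs₁ : 0 < s₁ := ht.trans hts₁
  have hs₂ : 0 < s₂ := ht.trans hts₂
  set c := (s₂ - s₁) * (s₁ + s₂ - 2 * t)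
  have hc : 0 ≤ c := mul_nonneg (by linarith) (by linarith)
  have hK₁ := integrable_cauchyKernel (μ := μ) hs₁
  have hK₂ := integrable_cauchyKernel (μ := μ) hs₂
  have hK₁₂ : Integrable (fun u => cauchyKernel s₁ u * cauchyKernel s₂ u) μ :=
    hK₂.bdd_mul (measurable_cauchyKernel s₁).aestronglyMeasurable
      (ae_of_all _ (norm_cauchyKernel_le_inv hs₁))
  have hcheb : hfun μ s₁ * hfun μ s₂ ≤ ∫ u, cauchyKernel s₁ u * cauchyKernel s₂ u ∂μ :=
    (monovary_cauchyKernel hs₁ hs₂).integral_mul_integral_le_integral_mul hK₁ hK₂ hK₁₂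
  have hgap : 0 < (s₂ - t) * hfun μ s₁ - (s₁ - t) * hfun μ s₂
      - c * ∫ u, cauchyKernel s₁ u * cauchyKernel s₂ u ∂μ := by
    have hlin : Integrable
        (fun u => (s₂ - t) * cauchyKernel s₁ u - (s₁ - t) * cauchyKernel s₂ u) μ :=
      (hK₁.const_mul _).sub (hK₂.const_mul _)
    have hpos : 0 < ∫ u, ((s₂ - t) * cauchyKernel s₁ u - (s₁ - t) * cauchyKernel s₂ u
        - c * (cauchyKernel s₁ u * cauchyKernel s₂ u)) ∂μ :=
      integral_pos_of_forall_pos (hlin.sub (hK₁₂.const_mul c)) (cauchyKernel_gap_pos ht hs₁ h12)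
    rwa [integral_sub hlin (hK₁₂.const_mul _), integral_sub (hK₁.const_mul _) (hK₂.const_mul _),
      integral_const_mul, integral_const_mul, integral_const_mul] at hpos
  have hh₁ := hfun_pos (μ := μ) hs₁
  have hh₂ := hfun_pos (μ := μ) hs₂
  have hc_cheb := mul_le_mul_of_nonneg_left hcheb hc
  rw [← sub_pos, kfun_sub_kfun hh₁.ne' hh₂.ne']
  exact div_pos (by linarith) (mul_pos hh₁ hh₂)

theorem surjOn_kfun [IsProbabilityMeasure μ] (ht : 0 < t) :
    SurjOn (fun s => kfun μ s t) (Ioi t) (Ioi 0) := by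
  intro y (hy : 0 < y)
  set b := t + (y / t + 1)
  have htb : t < b := lt_add_of_pos_right t (by positivity)
  have hyb : y < kfun μ b t :=
    calc y < (b - t) * t := by
          rw [add_sub_cancel_left, add_mul, div_mul_cancel₀ y ht.ne']; linarith
      _ ≤ kfun μ b t := mul_le_kfun ht htb.le
  obtain ⟨s, hs, hks⟩ := intermediate_value_Ioo htb.le
    ((continuousOn_kfun ht).mono Icc_subset_Ici_self) ⟨(kfun_self μ t).trans_lt hy, hyb⟩
  exact ⟨s, hs.1, hks⟩

theorem bijOn_kfun [IsProbabilityMeasure μ] (ht : 0 < t) :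
    BijOn (fun s => kfun μ s t) (Ioi t) (Ioi 0) :=
  ⟨fun s (hs : t < s) => (mul_pos (sub_pos.mpr hs) ht).trans_le (mul_le_kfun ht hs.le),
    (strictMonoOn_kfun ht).injOn, surjOn_kfun ht⟩

end KFun

theorem stmt5_general (μ : MeasureTheory.Measure ℝ) [IsProbabilityMeasure μ]
    (r t : ℝ) (hr : 0 < r) (ht : 0 < t) :
    (∀ s ∈ Ioi t,
        ((s - t) ^ 2 - (s - t) / hfun μ s + r ^ 2 = 0 ↔ kfun μ s t = r ^ 2)) ∧
      ∃! s : ℝ, s ∈ Ioi t ∧ (s - t) ^ 2 - (s - t) / hfun μ s + r ^ 2 = 0 := by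
  have hiff : ∀ s, (s - t) ^ 2 - (s - t) / hfun μ s + r ^ 2 = 0 ↔ kfun μ s t = r ^ 2 := by
    intro s
    rw [kfun_eq_div_sub_sq]
    constructor <;> intro h <;> linarith
  refine ⟨fun s _ => hiff s, ?_⟩
  have hk := bijOn_kfun (μ := μ) ht
  obtain ⟨s, hs, hks⟩ := hk.surjOn (pow_pos hr 2)
  refine ⟨s, ⟨hs, (hiff s).2 hks⟩, fun s' ⟨hs', hks'⟩ => hk.injOn hs' hs ?_⟩
  exact ((hiff s').1 hks').trans hks.symm

/-- For a symmetric non-Dirac probability measure `μ` on `ℝ`, `r, t > 0`: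
for `s ∈ (t,∞)` the equation `(s−t)² − (s−t)/h(s) + r² = 0` is equivalent to
`k(s,t) = r²`, and this equation has a unique solution `s ∈ (t,∞)`. -/
theorem stmt5 (μ : MeasureTheory.Measure ℝ) [IsProbabilityMeasure μ]
    (hsym : μ.map (fun u => -u) = μ)
    (hnd : ∀ c : ℝ, μ ≠ MeasureTheory.Measure.dirac c)
    (r t : ℝ) (hr : 0 < r) (ht : 0 < t) :
    (∀ s ∈ Ioi t,
        ((s - t) ^ 2 - (s - t) / hfun μ s + r ^ 2 = 0 ↔ kfun μ s t = r ^ 2)) ∧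
      ∃! s : ℝ, s ∈ Ioi t ∧ (s - t) ^ 2 - (s - t) / hfun μ s + r ^ 2 = 0 :=
  stmt5_general μ r t hr ht
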